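/- arXiv:1210.7396 — 2 statements merged into one kernel-verified Lean document; each statement's English description precedes it below -/
import Mathlib

section
/- Let b : ℕ → ℚ satisfy b(0)=1, b(1)=-1, b(2)=A with A ≤ 0, and b(n) = -(1/2)·∑_{k=0}^{n-1} b(k)·C(n+1,k+1) for n ≥ 3. Define s(j,d) = ∑_{k=j}^{d} (1/(k+1))·C(d-j,d-k)·b(k). Then for all d ≥ 2 and all 0 ≤ j ≤ d, s(j,d) = (-1)^d · s(d-j,d). -/
/-!
Put `c k = b k / (k + 1)` and `T(j, m) = ∑ₜ C(m, t) c (j + t)`, so that `s j d = T(j, d - j)` and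
`T` obeys the Pascal rule `T(j, m + 1) = T(j, m) + T(j + 1, m)`. Dividing the recurrence by `n + 1`
turns it into `T(0, n) = -c n`, valid for every odd `n` (for `n = 1` because `b 0 + b 1 = 0`).

The array `(-1)^(j+m) T(m, j)` obeys the same Pascal rule, so `T` is antisymmetric in this sense
as soon as `T(0, n) = (-1)^n c n` for all `n`. For even `n` this follows by induction: iterating
the Pascal rule gives `T(0, n) = c n + ∑_{r<n} T(r, n-1-r)`, and by the symmetry already known at
the odd level `n - 1` the sum equals its own negative.
-/

open Finset

section

variable {R : Type*} [CommRing R]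

def binomSum (c : ℕ → R) (j m : ℕ) : R :=
  ∑ t ∈ range (m + 1), (m.choose t : R) * c (j + t)

@[simp]
lemma binomSum_zero_right (c : ℕ → R) (j : ℕ) : binomSum c j 0 = c j := by
  simp [binomSum]

lemma binomSum_succ_right (c : ℕ → R) (j m : ℕ) :
    binomSum c j (m + 1) = binomSum c j m + binomSum c (j + 1) m := by
  have hlow :
      binomSum c j m = ∑ t ∈ range (m + 1), (m.choose (t + 1) : R) * c (j + (t + 1)) + c j := by
    rw [binomSum, sum_range_succ', sum_range_succ, Nat.choose_succ_self]
    simp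
  have hhigh : binomSum c (j + 1) m = ∑ t ∈ range (m + 1), (m.choose t : R) * c (j + (t + 1)) :=
    sum_congr rfl fun t _ => by rw [add_right_comm, add_assoc]
  rw [hlow, hhigh, binomSum, sum_range_succ']
  simp only [Nat.choose_succ_succ, Nat.cast_add, add_mul, sum_add_distrib, Nat.choose_zero_right,
    Nat.cast_one, one_mul, add_zero]
  ring

lemma binomSum_succ_right_eq_add_sum (c : ℕ → R) (m : ℕ) : ∀ j,
    binomSum c j (m + 1) = c (j + m + 1) + ∑ r ∈ range (m + 1), binomSum c (j + r) (m - r) := by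
  induction m with
  | zero => intro j; simp [binomSum_succ_right, add_comm]
  | succ m ih =>
    intro j
    rw [binomSum_succ_right c j (m + 1), ih (j + 1), sum_range_succ' _ (m + 1)]
    simp only [Nat.add_sub_add_right, Nat.sub_zero, add_zero, add_right_comm j 1, add_assoc]
    ring

theorem binomSum_symm_of_lt {c : ℕ → R} {N : ℕ}
    (hc : ∀ k < N, binomSum c 0 k = (-1) ^ k * c k) (m : ℕ) :
    ∀ j, j + m < N → binomSum c j m = (-1) ^ (j + m) * binomSum c m j := by
  induction m with
  | zero =>
    intro j hj
    rw [binomSum_zero_right, add_zero, hc j (by omega), ← mul_assoc, ← pow_add,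
      Even.neg_one_pow ⟨j, rfl⟩, one_mul]
  | succ m ih =>
    intro j hj
    have hpascal := binomSum_succ_right c m j
    rw [binomSum_succ_right, ih j (by omega), ih (j + 1) (by omega), hpascal]
    ring

lemma sum_Icc_choose_mul_eq_binomSum (c : ℕ → R) {j d : ℕ} (h : j ≤ d) :
    ∑ k ∈ Icc j d, ((d - j).choose (d - k) : R) * c k = binomSum c j (d - j) := by
  rw [← Ico_add_one_right_eq_Icc, sum_Ico_eq_sum_range, binomSum, Nat.sub_add_comm h]
  refine sum_congr rfl fun t ht => ?_
  rw [mem_range] at ht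
  rw [show d - (j + t) = d - j - t by omega, Nat.choose_symm (by omega)]

end

section

variable {R : Type*} [CommRing R] [NoZeroDivisors R] [CharZero R] {c : ℕ → R}

lemma binomSum_zero_left_succ_of_odd {m : ℕ} (hm : Odd m)
    (hc : ∀ k ≤ m, binomSum c 0 k = (-1) ^ k * c k) :
    binomSum c 0 (m + 1) = c (m + 1) := by
  have hanti : ∑ r ∈ range (m + 1), binomSum c r (m - r) = 0 := by
    rw [← CharZero.eq_neg_self_iff, ← sum_neg_distrib]
    conv_lhs => rw [← sum_range_reflect]
    refine sum_congr rfl fun r hr => ?_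
    rw [mem_range] at hr
    rw [show m + 1 - 1 - r = m - r by omega, Nat.sub_sub_self (by omega),
      binomSum_symm_of_lt (N := m + 1) (fun k hk => hc k (by omega)) r (m - r) (by omega),
      Nat.sub_add_cancel (by omega), hm.neg_one_pow, neg_one_mul]
  simp only [binomSum_succ_right_eq_add_sum, zero_add, hanti, add_zero]

theorem binomSum_zero_left_eq_neg_one_pow_mul (hodd : ∀ n, Odd n → binomSum c 0 n = -c n)
    (n : ℕ) : binomSum c 0 n = (-1) ^ n * c n := by
  induction n using Nat.strong_induction_on with
  | _ n ih =>
    rcases Nat.even_or_odd n with heven | hodd_n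
    · obtain _ | m := n
      · simp
      rw [heven.neg_one_pow, one_mul]
      exact binomSum_zero_left_succ_of_odd (Nat.not_even_iff_odd.mp (Nat.even_add_one.mp heven))
        fun k hk => ih k (by omega)
    · rw [hodd_n.neg_one_pow, hodd n hodd_n, neg_one_mul]

theorem binomSum_symm (hodd : ∀ n, Odd n → binomSum c 0 n = -c n) (j m : ℕ) :
    binomSum c j m = (-1) ^ (j + m) * binomSum c m j :=
  binomSum_symm_of_lt (N := j + m + 1)
    (fun k _ => binomSum_zero_left_eq_neg_one_pow_mul hodd k) m j (by omega)

end

section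

variable {K : Type*} [Field K] [CharZero K]

lemma add_one_mul_binomSum_div_add_one (b : ℕ → K) (n : ℕ) :
    (n + 1 : K) * binomSum (fun k => b k / (k + 1)) 0 n
      = ∑ k ∈ range (n + 1), b k * ((n + 1).choose (k + 1) : K) := by
  rw [binomSum, mul_sum]
  refine sum_congr rfl fun k _ => ?_
  have hchoose : ((n : K) + 1) * n.choose k = (n + 1).choose (k + 1) * ((k : K) + 1) := by
    exact_mod_cast Nat.add_one_mul_choose_eq n k
  rw [zero_add]
  field_simp
  linear_combination b k * hchoose

lemma binomSum_div_add_one_eq_neg {b : ℕ → K} {n : ℕ}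
    (h : 2 * b n = -∑ k ∈ range n, b k * ((n + 1).choose (k + 1) : K)) :
    binomSum (fun k => b k / (k + 1)) 0 n = -(b n / (n + 1)) := by
  have hn : (n + 1 : K) ≠ 0 := Nat.cast_add_one_ne_zero n
  apply mul_left_cancel₀ hn
  rw [add_one_mul_binomSum_div_add_one, sum_range_succ, Nat.choose_self, Nat.cast_one, mul_one,
    mul_neg, mul_div_cancel₀ _ hn]
  linear_combination h

end

theorem stmt_8_general (b : ℕ → ℚ)
    (h0 : b 0 = 1) (h1 : b 1 = -1)
    (hrec : ∀ n, 3 ≤ n →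
      2 * b n = -∑ k ∈ Finset.range n, b k * ((n + 1).choose (k + 1) : ℚ))
    (s : ℕ → ℕ → ℚ)
    (hs : ∀ j d, s j d = ∑ k ∈ Finset.Icc j d,
      (1 / (k + 1 : ℚ)) * ((d - j).choose (d - k) : ℚ) * b k) :
    ∀ d, 2 ≤ d → ∀ j, j ≤ d → s j d = (-1) ^ d * s (d - j) d := by
  set c : ℕ → ℚ := fun k => b k / (k + 1)
  have hodd : ∀ n, Odd n → binomSum c 0 n = -c n := by
    intro n hn
    obtain rfl | hn3 : n = 1 ∨ 3 ≤ n := by obtain ⟨k, rfl⟩ := hn; omega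
    · norm_num [c, binomSum, sum_range_succ, h0, h1]
    · exact binomSum_div_add_one_eq_neg (hrec n hn3)
  have hsc : ∀ j d, j ≤ d → s j d = binomSum c j (d - j) := by
    intro j d hj
    rw [hs, ← sum_Icc_choose_mul_eq_binomSum c hj]
    refine sum_congr rfl fun k _ => ?_
    simp only [c]
    ring
  intro d _ j hj
  rw [hsc j d hj, hsc (d - j) d (by omega), Nat.sub_sub_self hj, binomSum_symm hodd,
    Nat.add_sub_cancel' hj]

theorem stmt_8 (A : ℚ) (hA : A ≤ 0) (b : ℕ → ℚ)
    (h0 : b 0 = 1) (h1 : b 1 = -1) (h2 : b 2 = A)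
    (hrec : ∀ n, 3 ≤ n →
      2 * b n = -∑ k ∈ Finset.range n, b k * ((n + 1).choose (k + 1) : ℚ))
    (s : ℕ → ℕ → ℚ)
    (hs : ∀ j d, s j d = ∑ k ∈ Finset.Icc j d,
      (1 / (k + 1 : ℚ)) * ((d - j).choose (d - k) : ℚ) * b k) :
    ∀ d, 2 ≤ d → ∀ j, j ≤ d → s j d = (-1) ^ d * s (d - j) d :=
  stmt_8_general b h0 h1 hrec s hs
end

section
/- Let a : ℕ → ℤ be the cubical Gromov coefficients with A = -1: a(0)=1, a(1)=-1, a(2)=-1, and 2·a(n) = -(∑_{k=0}^{n-2} a(k)·C(n-1,k)·2^{n-1-k} + ∑_{k=0}^{n-1} a(k)·C(n,k)·2^{n-k}) for n ≥ 3. Let E : ℕ → ℤ be the secant (Euler) numbers defined by E(0)=1 and, for n ≥ 1, 2·E(n) + ∑_{k=0}^{n-1} C(2n,2k)·2^{2n-2k}·E(k)·(-1)^{n-k} = 2·(-1)^n — equivalently E(n) are the Taylor coefficients of sec(x) = ∑ E(n)·x^{2n}/(2n)!. Then a(2n) = (-1)^n·E(n) for all n ≥ 0. -/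
/-!
Put `A n = (-1) ^ n * E n`, so that `S = ∑ A n X^(2n)/(2n)!` is the series of `sech`, and write
`C = e^X + e^(-X)`. The secant recurrence says that `(e^(2X) + 1) S` has coefficient `2` at every
`X^(2n)/(2n)!`; since `S` is even this gives `C² S = 2C`, i.e. `C S = 2`.

The sequence `m ↦ A ⌈m/2⌉` has exponential generating function `F = S + S'`. Differentiating
`C S = 2` gives `F C² = 4 e^(-X)`, hence `e^(2X) F(X) = F(-X)`, which read coefficientwise is
`∑ₖ C(m,k) 2^(m-k) A ⌈k/2⌉ = (-1)^m A ⌈m/2⌉`. This identity makes the cubical Gromov recurrence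
hold for `m ↦ A ⌈m/2⌉`, and the recurrence determines `a` from `a 0`, `a 1`, `a 2`.
-/

open Finset Nat PowerSeries

theorem Finset.sum_range_two_mul_add_one_of_odd_eq_zero {M : Type*} [AddCommMonoid M]
    (f : ℕ → M) (hf : ∀ k, f (2 * k + 1) = 0) (n : ℕ) :
    ∑ k ∈ range (2 * n + 1), f k = ∑ i ∈ range (n + 1), f (2 * i) := by
  induction n with
  | zero => simp
  | succ n ih =>
    rw [show 2 * (n + 1) + 1 = 2 * n + 1 + 1 + 1 by ring, sum_range_succ, sum_range_succ, ih, hf,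
      add_zero, sum_range_succ (n := n + 1)]
    rfl

/-- The recurrence characterising the coefficients `A n` of `sech X = ∑ A n X^(2n)/(2n)!`. -/
def SechRecurrence {K : Type*} [Field K] (A : ℕ → K) : Prop :=
  ∀ n, ∑ k ∈ range (n + 1), ((2 * n).choose (2 * k) : K) * A k * 2 ^ (2 * n - 2 * k) + A n = 2

namespace PowerSeries

theorem rescale_neg_one_rescale_neg_one {R : Type*} [CommRing R] (f : R⟦X⟧) :
    rescale (-1 : R) (rescale (-1) f) = f := by
  rw [rescale_rescale, neg_one_mul, neg_neg, rescale_one, RingHom.id_apply]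

variable {K : Type*} [Field K]

def egf (u : ℕ → K) : K⟦X⟧ := mk fun n => u n / n !

@[simp]
theorem coeff_egf (u : ℕ → K) (n : ℕ) : coeff n (egf u) = u n / n ! := coeff_mk _ _

theorem egf_add (u v : ℕ → K) : egf (u + v) = egf u + egf v := by
  ext n; simp [add_div]

theorem rescale_egf (c : K) (u : ℕ → K) : rescale c (egf u) = egf fun n => c ^ n * u n := by
  ext n; simp [coeff_rescale, mul_div_assoc]

def evenEgf (A : ℕ → K) : K⟦X⟧ := egf fun j => if Even j then A (j / 2) else 0

theorem rescale_neg_one_evenEgf (A : ℕ → K) : rescale (-1) (evenEgf A) = evenEgf A := by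
  rw [evenEgf, rescale_egf]
  congr 1
  funext j
  split_ifs with hj
  · rw [hj.neg_one_pow, one_mul]
  · rw [mul_zero]

variable [CharZero K]

theorem egf_injective : Function.Injective (egf (K := K)) := by
  intro u v h
  funext n
  have hn : (n ! : K) ≠ 0 := cast_ne_zero.2 n.factorial_ne_zero
  simpa [div_left_inj' hn] using congrArg (coeff n) h

theorem egf_mul (u v : ℕ → K) :
    egf u * egf v = egf fun n => ∑ k ∈ range (n + 1), (n.choose k : K) * u k * v (n - k) := by
  ext n
  rw [coeff_mul, Nat.sum_antidiagonal_eq_sum_range_succ_mk, coeff_egf, sum_div]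
  refine sum_congr rfl fun k hk => ?_
  have hn : (n ! : K) ≠ 0 := cast_ne_zero.2 n.factorial_ne_zero
  rw [coeff_egf, coeff_egf, cast_choose K (mem_range_succ_iff.1 hk)]
  field_simp

theorem exp_eq_egf : exp K = egf 1 := by
  ext n; simp

theorem derivative_egf (u : ℕ → K) : d⁄dX K (egf u) = egf fun n => u (n + 1) := by
  ext n
  rw [coeff_derivative, coeff_egf, coeff_egf, factorial_succ, cast_mul]
  field_simp
  push_cast; ring

theorem egf_ceil_half (A : ℕ → K) :
    egf (fun m => A ((m + 1) / 2)) = evenEgf A + d⁄dX K (evenEgf A) := by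
  rw [evenEgf, derivative_egf, ← egf_add]
  congr 1
  funext m
  rcases Nat.even_or_odd' m with ⟨r, rfl | rfl⟩
  · have : (2 * r + 1) / 2 = r := by omega
    simp [this, Nat.even_add_one]
  · have : (2 * r + 1 + 1) / 2 = r + 1 := by omega
    simp [this, Nat.even_add_one]

theorem exp_mul_rescale_neg_one_exp : exp K * rescale (-1) (exp K) = 1 :=
  exp_mul_exp_neg_eq_one

variable (K) in
noncomputable def twoCosh : K⟦X⟧ := exp K + rescale (-1) (exp K)

theorem rescale_neg_one_twoCosh : rescale (-1) (twoCosh K) = twoCosh K := by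
  rw [twoCosh, map_add, rescale_neg_one_rescale_neg_one, add_comm]

theorem twoCosh_ne_zero : twoCosh K ≠ 0 := by
  intro h
  have := congrArg (coeff 0) h
  rw [twoCosh, map_add, coeff_exp, coeff_rescale, coeff_exp] at this
  norm_num at this

theorem derivative_twoCosh : d⁄dX K (twoCosh K) = exp K - rescale (-1) (exp K) := by
  simp only [twoCosh, map_add, exp_eq_egf, rescale_egf, derivative_egf, sub_eq_add_neg]
  congr 1
  ext n; simp [pow_succ, neg_div]

theorem evenEgf_mul_twoCosh {A : ℕ → K} (hA : SechRecurrence A) :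
    evenEgf A * twoCosh K = 2 := by
  set q : ℕ → K := fun n =>
    ∑ k ∈ range (n + 1), (n.choose k : K) * (if Even k then A (k / 2) else 0) * 2 ^ (n - k) +
      if Even n then A (n / 2) else 0
  have hQ : evenEgf A * (exp K ^ 2 + 1) = egf q := by
    rw [mul_add, mul_one, exp_pow_eq_rescale_exp, exp_eq_egf, rescale_egf, evenEgf, egf_mul,
      ← egf_add]
    simp only [Pi.one_apply, mul_one]
    rfl
  have hq_even : ∀ m, q (2 * m) = 2 := by
    intro m
    rw [← hA m]
    simp only [q]
    rw [sum_range_two_mul_add_one_of_odd_eq_zero]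
    · simp
    · intro k
      simp
  have hQ_add : egf q + rescale (-1) (egf q) = 2 * twoCosh K := by
    ext n
    rw [two_mul]
    simp only [map_add, coeff_rescale, coeff_egf, twoCosh, coeff_exp, map_div₀, map_one,
      map_natCast]
    rcases Nat.even_or_odd' n with ⟨m, rfl | rfl⟩
    · rw [hq_even, (even_two_mul m).neg_one_pow]
      ring
    · rw [(odd_two_mul_add_one m).neg_one_pow]
      ring
  -- `evenEgf A` is even, so `Q(X) + Q(-X) = (e^(2X) + 2 + e^(-2X)) S = C² S`.
  have hQ_sq : evenEgf A * twoCosh K ^ 2 = egf q + rescale (-1) (egf q) := by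
    rw [← hQ, map_mul, rescale_neg_one_evenEgf, map_add, map_pow, map_one, twoCosh]
    linear_combination (2 * evenEgf A) * exp_mul_rescale_neg_one_exp (K := K)
  exact mul_left_cancel₀ (twoCosh_ne_zero (K := K)) (by linear_combination hQ_sq.trans hQ_add)

theorem egf_ceil_half_mul_twoCosh_sq {A : ℕ → K} (hA : SechRecurrence A) :
    egf (fun m => A ((m + 1) / 2)) * twoCosh K ^ 2 = 4 * rescale (-1) (exp K) := by
  have hSC := evenEgf_mul_twoCosh hA
  have hd := congrArg (d⁄dX K) hSC
  rw [Derivation.leibniz, derivative_twoCosh, smul_eq_mul, smul_eq_mul,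
    show (2 : K⟦X⟧) = (2 : ℕ) from rfl, Derivation.map_natCast] at hd
  rw [egf_ceil_half, twoCosh]
  rw [twoCosh] at hSC hd
  linear_combination (exp K + rescale (-1) (exp K) - (exp K - rescale (-1) (exp K))) * hSC +
    (exp K + rescale (-1) (exp K)) * hd

theorem exp_sq_mul_egf_ceil_half {A : ℕ → K} (hA : SechRecurrence A) :
    exp K ^ 2 * egf (fun m => A ((m + 1) / 2)) = rescale (-1) (egf fun m => A ((m + 1) / 2)) := by
  have hF := egf_ceil_half_mul_twoCosh_sq hA
  have hF_neg := congrArg (rescale (-1 : K)) hF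
  rw [map_mul, map_mul, map_pow, rescale_neg_one_twoCosh, rescale_neg_one_rescale_neg_one,
    map_ofNat] at hF_neg
  apply mul_right_cancel₀ (pow_ne_zero 2 (twoCosh_ne_zero (K := K)))
  linear_combination exp K ^ 2 * hF - hF_neg + 4 * exp K * exp_mul_rescale_neg_one_exp (K := K)

end PowerSeries

theorem SechRecurrence.sum_ceil_half_mul_choose_mul_two_pow {K : Type*} [Field K] [CharZero K]
    {A : ℕ → K} (hA : SechRecurrence A) (m : ℕ) :
    ∑ k ∈ range (m + 1), A ((k + 1) / 2) * (m.choose k : K) * 2 ^ (m - k) =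
      (-1) ^ m * A ((m + 1) / 2) := by
  have hF := exp_sq_mul_egf_ceil_half hA
  rw [exp_pow_eq_rescale_exp, exp_eq_egf, rescale_egf, mul_comm, egf_mul, rescale_egf] at hF
  simpa [mul_comm, mul_left_comm] using congrFun (egf_injective hF) m

theorem sechRecurrence_neg_one_pow_mul {E : ℕ → ℤ} (hE0 : E 0 = 1)
    (hErec : ∀ n, 1 ≤ n →
      2 * E n + ∑ k ∈ range n, ((2 * n).choose (2 * k) : ℤ) * 2 ^ (2 * n - 2 * k) * E k * (-1) ^ (n - k)
        = 2 * (-1) ^ n) :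
    SechRecurrence fun n => ((-1) ^ n * E n : ℚ) := by
  intro n
  suffices ∑ k ∈ range (n + 1), ((2 * n).choose (2 * k) : ℤ) * ((-1) ^ k * E k) *
      2 ^ (2 * n - 2 * k) + (-1) ^ n * E n = 2 by beta_reduce; exact_mod_cast this
  rcases Nat.eq_zero_or_pos n with rfl | hn
  · simp [hE0]
  have hsign : ∀ k ∈ range n, ((2 * n).choose (2 * k) : ℤ) * ((-1) ^ k * E k) * 2 ^ (2 * n - 2 * k) =
      (-1) ^ n * (((2 * n).choose (2 * k) : ℤ) * 2 ^ (2 * n - 2 * k) * E k * (-1) ^ (n - k)) := by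
    intro k hk
    have : (-1 : ℤ) ^ k = (-1) ^ n * (-1) ^ (n - k) := by
      rw [← pow_add, show n + (n - k) = k + 2 * (n - k) by grind, pow_add, pow_mul, neg_one_sq,
        one_pow, mul_one]
    rw [this]; ring
  rw [sum_range_succ, sum_congr rfl hsign, ← mul_sum, Nat.choose_self, Nat.sub_self]
  have hsq : ((-1 : ℤ) ^ n) ^ 2 = 1 := by rw [← pow_mul, mul_comm, pow_mul, neg_one_sq, one_pow]
  linear_combination (-1) ^ n * hErec n hn + 2 * hsq

def cubicalGromovRhs (a : ℕ → ℤ) (n : ℕ) : ℤ :=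
  -((∑ k ∈ range (n - 1), a k * ((n - 1).choose k : ℤ) * 2 ^ (n - 1 - k)) +
    ∑ k ∈ range n, a k * (n.choose k : ℤ) * 2 ^ (n - k))

theorem cubicalGromovRhs_congr {a b : ℕ → ℤ} {n : ℕ} (h : ∀ k < n, a k = b k) :
    cubicalGromovRhs a n = cubicalGromovRhs b n := by
  unfold cubicalGromovRhs
  congr 2 <;> refine sum_congr rfl fun k hk => ?_ <;> rw [h k (by simp at hk; omega)]

theorem eq_of_two_mul_eq_cubicalGromovRhs {a b : ℕ → ℤ} (hinit : ∀ n < 3, a n = b n)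
    (ha : ∀ n, 3 ≤ n → 2 * a n = cubicalGromovRhs a n)
    (hb : ∀ n, 3 ≤ n → 2 * b n = cubicalGromovRhs b n) (n : ℕ) : a n = b n := by
  induction n using Nat.strong_induction_on with
  | _ n ih =>
    rcases lt_or_ge n 3 with hn | hn
    · exact hinit n hn
    · have := (ha n hn).trans ((cubicalGromovRhs_congr ih).trans (hb n hn).symm)
      omega

theorem two_mul_ceil_half_eq_cubicalGromovRhs {B : ℕ → ℤ}
    (hB : ∀ m, ∑ k ∈ range (m + 1), B ((k + 1) / 2) * (m.choose k : ℤ) * 2 ^ (m - k) =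
      (-1) ^ m * B ((m + 1) / 2))
    {n : ℕ} (hn : 1 ≤ n) :
    2 * B ((n + 1) / 2) = cubicalGromovRhs (fun m => B ((m + 1) / 2)) n := by
  have hB_lt : ∀ m, ∑ k ∈ range m, B ((k + 1) / 2) * (m.choose k : ℤ) * 2 ^ (m - k) =
      ((-1) ^ m - 1) * B ((m + 1) / 2) := by
    intro m
    have := hB m
    rw [sum_range_succ, choose_self, Nat.sub_self, pow_zero, cast_one, mul_one, mul_one] at this
    linear_combination this
  obtain ⟨m, rfl⟩ := Nat.exists_eq_add_of_le' hn
  simp only [cubicalGromovRhs, Nat.add_sub_cancel, hB_lt, pow_succ]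
  rcases Nat.even_or_odd m with hm | hm
  · rw [hm.neg_one_pow]
    ring
  · have : (m + 1) / 2 = (m + 1 + 1) / 2 := by obtain ⟨r, rfl⟩ := hm; omega
    rw [hm.neg_one_pow, this]
    ring

theorem stmt_19 (a : ℕ → ℤ)
    (h0 : a 0 = 1) (h1 : a 1 = -1) (h2 : a 2 = -1)
    (hrec : ∀ n, 3 ≤ n →
      2 * a n = -((∑ k ∈ Finset.range (n - 1), a k * ((n - 1).choose k : ℤ) * 2 ^ (n - 1 - k)) +
        ∑ k ∈ Finset.range n, a k * (n.choose k : ℤ) * 2 ^ (n - k)))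
    (E : ℕ → ℤ) (hE0 : E 0 = 1)
    (hErec : ∀ n, 1 ≤ n →
      2 * E n + ∑ k ∈ Finset.range n,
        ((2 * n).choose (2 * k) : ℤ) * 2 ^ (2 * n - 2 * k) * E k * (-1) ^ (n - k)
        = 2 * (-1) ^ n) :
    ∀ n, a (2 * n) = (-1) ^ n * E n := by
  set A : ℕ → ℤ := fun n => (-1) ^ n * E n
  have hA : ∀ m, ∑ k ∈ range (m + 1), A ((k + 1) / 2) * (m.choose k : ℤ) * 2 ^ (m - k) =
      (-1) ^ m * A ((m + 1) / 2) := fun m => by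
    exact_mod_cast (sechRecurrence_neg_one_pow_mul hE0 hErec).sum_ceil_half_mul_choose_mul_two_pow m
  have hE1 : E 1 = 1 := by
    have := hErec 1 le_rfl
    rw [sum_range_one, hE0] at this
    norm_num at this
    linarith
  have hinit : ∀ n < 3, a n = A ((n + 1) / 2) := by
    intro n hn
    interval_cases n <;> simp [A, h0, h1, h2, hE0, hE1]
  intro n
  rw [eq_of_two_mul_eq_cubicalGromovRhs hinit hrec
    (fun n hn => two_mul_ceil_half_eq_cubicalGromovRhs hA (by omega)) (2 * n)]
  simp [A, show (2 * n + 1) / 2 = n by omega]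
end
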